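/- The unique minimizer of the function Z ↦ ‖Z‖_* + (c/2)‖Z − M‖_F² over matrices Z, where c > 0, is given by singular value thresholding: Z = U · max(S − 1/c, 0) · Vᵀ, where M = U S Vᵀ is a singular value decomposition of M. -/

import Mathlib

/-!
Write `Ẑ = U D Vᵀ` with `D = (S - 1/c)₊` and put `W = c • (M - Ẑ) = U E Vᵀ`, where
`E = min (c S) 1` is rectangular-diagonal with entries in `[0, 1]`. Hence `W` has spectral norm
at most `1`, so `⟪Z, W⟫ ≤ ‖Z‖_*` for every `Z` by the duality definition of the nuclear norm,
while `‖Ẑ‖_* ≤ ∑ D = ⟪Ẑ, W⟫` because `E = 1` wherever `D > 0`. Thus `W` is a subgradient of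
`‖·‖_*` at `Ẑ`, and expanding the square gives
`‖Z‖_* + (c/2)‖Z - M‖² ≥ ‖Ẑ‖_* + (c/2)‖Ẑ - M‖² + (c/2)‖Z - Ẑ‖²`.
-/

open Matrix

/-- The nuclear norm of a real matrix, defined by duality with the spectral
(ℓ²-operator) norm: `‖A‖_* = sup { ⟨A, B⟩_F : ‖B‖_op ≤ 1 }`. -/
noncomputable def nuclearNorm {n m : ℕ} (A : Matrix (Fin n) (Fin m) ℝ) : ℝ :=
  sSup {x : ℝ | ∃ B : Matrix (Fin n) (Fin m) ℝ,
    (∀ v : EuclideanSpace ℝ (Fin m), ‖(Matrix.toEuclideanLin B) v‖ ≤ ‖v‖) ∧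
    x = Matrix.trace (Aᵀ * B)}

namespace Matrix

section Trace

variable {ι κ : Type*} [Fintype ι] [Fintype κ]

theorem trace_transpose_mul_eq_sum (A B : Matrix ι κ ℝ) :
    trace (Aᵀ * B) = ∑ i, ∑ j, A i j * B i j := by
  rw [trace, Finset.sum_comm]
  simp [mul_apply]

theorem trace_transpose_mul_conj (U : Matrix ι ι ℝ) (V : Matrix κ κ ℝ) (A B : Matrix ι κ ℝ) :
    trace ((U * A * Vᵀ)ᵀ * B) = trace (Aᵀ * (Uᵀ * B * V)) := by
  simp only [transpose_mul, transpose_transpose, Matrix.mul_assoc]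
  rw [trace_mul_comm V]
  simp only [Matrix.mul_assoc]

end Trace

section Contraction

variable {ι κ ν : Type*} [Fintype ι] [Fintype κ] [DecidableEq κ]

def IsContraction (B : Matrix ι κ ℝ) : Prop :=
  ∀ v : EuclideanSpace ℝ κ, ‖toEuclideanLin B v‖ ≤ ‖v‖

theorem IsContraction.mul [Fintype ν] [DecidableEq ν] {A : Matrix ι κ ℝ} {B : Matrix κ ν ℝ}
    (hA : A.IsContraction) (hB : B.IsContraction) : (A * B).IsContraction := fun v => by
  rw [toLpLin_mul_same]
  exact (hA _).trans (hB v)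

theorem isContraction_of_transpose_mul_self {A : Matrix κ κ ℝ} (hA : Aᵀ * A = 1) :
    A.IsContraction := fun v => by
  refine ((pow_left_inj₀ (norm_nonneg _) (norm_nonneg _) two_ne_zero).mp ?_).le
  simp only [EuclideanSpace.real_norm_sq_eq, toLpLin_apply]
  calc ∑ i, (A *ᵥ v.ofLp) i ^ 2 = v.ofLp ⬝ᵥ ((Aᵀ * A) *ᵥ v.ofLp) := by
        rw [← mulVec_mulVec, mulVec_transpose, dotProduct_comm, ← dotProduct_mulVec]
        simp only [dotProduct, sq]
    _ = ∑ i, v i ^ 2 := by simp only [hA, one_mulVec, dotProduct, sq]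

theorem IsContraction.abs_apply_le_one {B : Matrix ι κ ℝ} (hB : B.IsContraction) (i : ι)
    (j : κ) : |B i j| ≤ 1 :=
  calc |B i j| = ‖toEuclideanLin B (EuclideanSpace.single j 1) i‖ := by simp [toLpLin_apply]
    _ ≤ ‖toEuclideanLin B (EuclideanSpace.single j 1)‖ := PiLp.norm_apply_le _ _
    _ ≤ ‖EuclideanSpace.single j (1 : ℝ)‖ := hB _
    _ = 1 := by simp

-- Schur test: Cauchy–Schwarz with weights `|B i j|` on each row, then sum over the columns.
theorem isContraction_of_sum_abs_le_one {B : Matrix ι κ ℝ}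
    (hrow : ∀ i, ∑ j, |B i j| ≤ 1) (hcol : ∀ j, ∑ i, |B i j| ≤ 1) : B.IsContraction := fun v => by
  refine (pow_le_pow_iff_left₀ (norm_nonneg _) (norm_nonneg _) two_ne_zero).mp ?_
  simp only [EuclideanSpace.real_norm_sq_eq, toLpLin_apply, mulVec, dotProduct]
  have hrow_sq : ∀ i, (∑ j, B i j * v j) ^ 2 ≤ ∑ j, |B i j| * v j ^ 2 := fun i =>
    calc (∑ j, B i j * v j) ^ 2 ≤ (∑ j, |B i j|) * ∑ j, |B i j| * v j ^ 2 :=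
          Finset.sum_sq_le_sum_mul_sum_of_sq_le_mul _ (fun _ _ => abs_nonneg _)
            (fun _ _ => by positivity)
            (fun j _ => by rw [← mul_assoc, abs_mul_abs_self, mul_pow, sq (B i j)])
      _ ≤ ∑ j, |B i j| * v j ^ 2 :=
          mul_le_of_le_one_left (Finset.sum_nonneg fun _ _ => by positivity) (hrow i)
  calc ∑ i, (∑ j, B i j * v j) ^ 2 ≤ ∑ i, ∑ j, |B i j| * v j ^ 2 :=
        Finset.sum_le_sum fun i _ => hrow_sq i
    _ = ∑ j, (∑ i, |B i j|) * v j ^ 2 := by rw [Finset.sum_comm]; simp only [Finset.sum_mul]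
    _ ≤ ∑ j, v j ^ 2 := Finset.sum_le_sum fun j _ => mul_le_of_le_one_left (sq_nonneg _) (hcol j)

end Contraction

end Matrix

theorem Finset.sum_abs_le_one_of_support_subsingleton {κ : Type*} [Fintype κ] {f : κ → ℝ}
    (hf : ∀ j, |f j| ≤ 1) (hsupp : (Function.support f).Subsingleton) : ∑ j, |f j| ≤ 1 := by
  rcases hsupp.eq_empty_or_singleton with hempty | ⟨j, hj⟩
  · simp [Function.support_eq_empty_iff.mp hempty]
  · rw [Fintype.sum_eq_single j fun j' hj' => by
      rw [abs_eq_zero, ← Function.notMem_support, hj]; exact hj']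
    exact hf j

theorem Matrix.isContraction_of_offDiag_eq_zero {n m : ℕ} {D : Matrix (Fin n) (Fin m) ℝ}
    (hdiag : ∀ (i : Fin n) (j : Fin m), (i : ℕ) ≠ (j : ℕ) → D i j = 0)
    (hD : ∀ i j, |D i j| ≤ 1) : D.IsContraction := by
  have hval : ∀ i j, D i j ≠ 0 → (i : ℕ) = j := fun i j h => by_contra fun hij => h (hdiag i j hij)
  refine isContraction_of_sum_abs_le_one (fun i => ?_) (fun j => ?_)
  · refine Finset.sum_abs_le_one_of_support_subsingleton (hD i) fun j hj j' hj' => ?_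
    exact Fin.ext ((hval i j hj).symm.trans (hval i j' hj'))
  · refine Finset.sum_abs_le_one_of_support_subsingleton (hD · j) fun i hi i' hi' => ?_
    exact Fin.ext ((hval i j hi).trans (hval i' j hi').symm)

theorem add_sum_sq_sub_lt_of_subgradient {ι κ : Type*} [Fintype ι] [Fintype κ]
    {f : Matrix ι κ ℝ → ℝ} {c : ℝ} (hc : 0 < c) {M Z₀ Z : Matrix ι κ ℝ}
    (hsub : f Z₀ + trace ((Z - Z₀)ᵀ * (c • (M - Z₀))) ≤ f Z) (hZ : Z ≠ Z₀) :
    f Z₀ + c / 2 * ∑ i, ∑ j, (Z₀ i j - M i j) ^ 2 <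
      f Z + c / 2 * ∑ i, ∑ j, (Z i j - M i j) ^ 2 := by
  have hdist : 0 < ∑ i, ∑ j, (Z i j - Z₀ i j) ^ 2 := by
    refine lt_of_le_of_ne (by positivity) fun h => hZ ?_
    ext i j
    have hi := (Finset.sum_eq_zero_iff_of_nonneg fun i _ => by positivity).mp h.symm i
      (Finset.mem_univ i)
    have hij := (Finset.sum_eq_zero_iff_of_nonneg fun j _ => by positivity).mp hi j
      (Finset.mem_univ j)
    exact sub_eq_zero.mp (pow_eq_zero_iff two_ne_zero |>.mp hij)
  have hexpand : c / 2 * ∑ i, ∑ j, (Z i j - M i j) ^ 2 =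
      c / 2 * ∑ i, ∑ j, (Z₀ i j - M i j) ^ 2 + c / 2 * ∑ i, ∑ j, (Z i j - Z₀ i j) ^ 2
        - trace ((Z - Z₀)ᵀ * (c • (M - Z₀))) := by
    simp only [trace_transpose_mul_eq_sum, Finset.mul_sum, ← Finset.sum_add_distrib,
      ← Finset.sum_sub_distrib, Matrix.sub_apply, Matrix.smul_apply, smul_eq_mul]
    congr! 2 with i _ j _
    ring
  linarith [mul_pos (half_pos hc) hdist]

section NuclearNorm

variable {n m : ℕ}

theorem trace_transpose_mul_le_nuclearNorm (A : Matrix (Fin n) (Fin m) ℝ)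
    {B : Matrix (Fin n) (Fin m) ℝ} (hB : B.IsContraction) : trace (Aᵀ * B) ≤ nuclearNorm A := by
  refine le_csSup ⟨∑ i, ∑ j, |A i j|, ?_⟩ ⟨B, hB, rfl⟩
  rintro _ ⟨B', hB', rfl⟩
  rw [trace_transpose_mul_eq_sum]
  gcongr with i _ j _
  calc A i j * B' i j ≤ |A i j| * |B' i j| := (le_abs_self _).trans (abs_mul _ _).le
    _ ≤ |A i j| := mul_le_of_le_one_right (abs_nonneg _) (IsContraction.abs_apply_le_one hB' i j)

theorem nuclearNorm_le_of_forall_isContraction {A : Matrix (Fin n) (Fin m) ℝ} {x : ℝ}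
    (h : ∀ B : Matrix (Fin n) (Fin m) ℝ, B.IsContraction → trace (Aᵀ * B) ≤ x) :
    nuclearNorm A ≤ x :=
  csSup_le ⟨0, 0, fun v => by simp, by simp⟩ fun _ ⟨B, hB, hx⟩ => hx ▸ h B hB

theorem nuclearNorm_orthogonal_conj_le_sum {U : Matrix (Fin n) (Fin n) ℝ}
    {V : Matrix (Fin m) (Fin m) ℝ} (hU : U * Uᵀ = 1) (hV : Vᵀ * V = 1)
    {D : Matrix (Fin n) (Fin m) ℝ} (hD : ∀ i j, 0 ≤ D i j) :
    nuclearNorm (U * D * Vᵀ) ≤ ∑ i, ∑ j, D i j := by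
  refine nuclearNorm_le_of_forall_isContraction fun B hB => ?_
  have hC : (Uᵀ * B * V).IsContraction :=
    ((isContraction_of_transpose_mul_self (by rwa [transpose_transpose])).mul hB).mul
      (isContraction_of_transpose_mul_self hV)
  rw [trace_transpose_mul_conj, trace_transpose_mul_eq_sum]
  gcongr with i _ j _
  exact mul_le_of_le_one_right (hD i j) ((le_abs_self _).trans (hC.abs_apply_le_one i j))

theorem nuclearNorm_add_trace_sub_le {A W : Matrix (Fin n) (Fin m) ℝ} (hW : W.IsContraction)
    (hA : nuclearNorm A ≤ trace (Aᵀ * W)) (Z : Matrix (Fin n) (Fin m) ℝ) :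
    nuclearNorm A + trace ((Z - A)ᵀ * W) ≤ nuclearNorm Z := by
  rw [transpose_sub, Matrix.sub_mul, trace_sub]
  linarith [trace_transpose_mul_le_nuclearNorm Z hW]

end NuclearNorm

theorem mul_sub_max_sub_one_div {c : ℝ} (hc : 0 < c) (s : ℝ) :
    c * (s - max (s - 1 / c) 0) = min (c * s) 1 := by
  rcases le_total s (1 / c) with hs | hs
  · rw [max_eq_right (by linarith), sub_zero, min_eq_left ((le_div_iff₀' hc).mp hs)]
  · rw [max_eq_left (by linarith), sub_sub_cancel, mul_one_div_cancel hc.ne',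
      min_eq_right ((div_le_iff₀' hc).mp hs)]

theorem max_sub_one_div_mul_min {c : ℝ} (hc : 0 < c) (s : ℝ) :
    max (s - 1 / c) 0 * min (c * s) 1 = max (s - 1 / c) 0 := by
  rcases le_total s (1 / c) with hs | hs
  · rw [max_eq_right (by linarith), zero_mul]
  · rw [min_eq_right ((div_le_iff₀' hc).mp hs), mul_one]

/-- The unique minimizer of `Z ↦ ‖Z‖_* + (c/2)‖Z − M‖_F²`, `c > 0`, is given by
singular value thresholding `Z = U (S − (1/c)I)₊ Vᵀ`, where `M = U S Vᵀ` is an SVD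
of `M` (U, V orthogonal, S rectangular-diagonal with nonnegative entries). -/
theorem svt_is_unique_minimizer {n m : ℕ} (c : ℝ) (hc : 0 < c)
    (U : Matrix (Fin n) (Fin n) ℝ) (S : Matrix (Fin n) (Fin m) ℝ)
    (V : Matrix (Fin m) (Fin m) ℝ)
    (M : Matrix (Fin n) (Fin m) ℝ)
    (hU : U * Uᵀ = 1 ∧ Uᵀ * U = 1) (hV : V * Vᵀ = 1 ∧ Vᵀ * V = 1)
    (hSdiag : ∀ (i : Fin n) (j : Fin m), (i : ℕ) ≠ (j : ℕ) → S i j = 0)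
    (hSnonneg : ∀ i j, 0 ≤ S i j)
    (hM : M = U * S * Vᵀ) :
    ∀ Z : Matrix (Fin n) (Fin m) ℝ,
      Z ≠ U * (Matrix.of fun i j => max (S i j - 1 / c) 0) * Vᵀ →
      nuclearNorm (U * (Matrix.of fun i j => max (S i j - 1 / c) 0) * Vᵀ) +
          c / 2 * ∑ i, ∑ j,
            ((U * (Matrix.of fun i j => max (S i j - 1 / c) 0) * Vᵀ) i j - M i j) ^ 2
        < nuclearNorm Z + c / 2 * ∑ i, ∑ j, (Z i j - M i j) ^ 2 := by
  intro Z hZ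
  set D : Matrix (Fin n) (Fin m) ℝ := of fun i j => max (S i j - 1 / c) 0
  set E : Matrix (Fin n) (Fin m) ℝ := of fun i j => min (c * S i j) 1
  have hW : c • (M - U * D * Vᵀ) = U * E * Vᵀ := by
    have hSD : c • (S - D) = E := by ext i j; exact mul_sub_max_sub_one_div hc (S i j)
    rw [hM, ← hSD, ← Matrix.sub_mul, ← Matrix.mul_sub, Matrix.mul_smul, Matrix.smul_mul]
  have hE : E.IsContraction :=
    isContraction_of_offDiag_eq_zero (fun i j hij => by simp [E, hSdiag i j hij])
      fun i j => abs_le.mpr ⟨neg_one_lt_zero.le.trans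
        (le_min (mul_nonneg hc.le (hSnonneg i j)) zero_le_one), min_le_right _ _⟩
  have hWc : (U * E * Vᵀ).IsContraction :=
    ((isContraction_of_transpose_mul_self hU.2).mul hE).mul
      (isContraction_of_transpose_mul_self (by rw [transpose_transpose]; exact hV.1))
  have hUEV : Uᵀ * (U * E * Vᵀ) * V = E := by
    simp only [← Matrix.mul_assoc, hU.2, Matrix.one_mul]
    simp only [Matrix.mul_assoc, hV.2, Matrix.mul_one]
  have hnuc : nuclearNorm (U * D * Vᵀ) ≤ trace ((U * D * Vᵀ)ᵀ * (U * E * Vᵀ)) :=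
    calc nuclearNorm (U * D * Vᵀ) ≤ ∑ i, ∑ j, D i j :=
          nuclearNorm_orthogonal_conj_le_sum hU.1 hV.2 fun _ _ => le_max_right _ _
      _ = trace ((U * D * Vᵀ)ᵀ * (U * E * Vᵀ)) := by
        rw [trace_transpose_mul_conj, hUEV, trace_transpose_mul_eq_sum]
        simp only [D, E, of_apply, max_sub_one_div_mul_min hc]
  exact add_sum_sq_sub_lt_of_subgradient hc (hW ▸ nuclearNorm_add_trace_sub_le hWc hnuc Z) hZ
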